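/- Let X be an open connected subset of ℝ^n and φ, ψ ∈ C^∞(X;ℝ). Let {ρ_ν}_{ν∈ℕ} be smooth compactly supported functions on X with 0 ≤ ρ_ν ≤ 1, such that for every compact K ⊆ X there is ν₀ with ρ_ν ≡ 1 on K for all ν ≥ ν₀, and such that |dρ_ν|² ≤ e^{ψ} on X for every ν. Then for every η ∈ dom(d) ∩ dom(d*_{φ−ψ,φ−2ψ}) ⊆ L²_k(X,φ−ψ): each ρ_ν η also lies in dom(d) ∩ dom(d*_{φ−ψ,φ−2ψ}), has compact support, and ρ_ν η → η as ν → ∞ in the graph norm, i.e. ‖ρ_ν η − η‖_{φ−ψ} → 0, ‖d(ρ_ν η) − dη‖_φ → 0, and ‖d*_{φ−ψ,φ−2ψ}(ρ_ν η) − d*_{φ−ψ,φ−2ψ} η‖_{φ−2ψ} → 0. -/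

import Mathlib

open MeasureTheory Real Topology Filter

noncomputable section

/-- Euclidean space `ℝⁿ`. -/
abbrev Euc (n : ℕ) := EuclideanSpace ℝ (Fin n)

/-- Strictly increasing multi-indices of length `k` in `{1,…,n}`, encoded as
`k`-element subsets of `Fin n`. -/
abbrev MIdx (n k : ℕ) := {s : Finset (Fin n) // s.card = k}

/-- A `k`-form on (an open subset of) `ℝⁿ`, given by its coefficient functions with respect to
the standard basis `dx^I`, `I` a strictly increasing multi-index of length `k`. -/
abbrev Form (n k : ℕ) := Euc n → MIdx n k → ℝ

/-- `msign ℓ J I` is the sign of the permutation rearranging the multi-index `(ℓ, j₁, …, j_m)`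
(`J = (j₁ < ⋯ < j_m)`) into the strictly increasing multi-index `I`, if the former is a
permutation of `I`, and `0` otherwise. -/
def msign {n : ℕ} (ℓ : Fin n) (J I : Finset (Fin n)) : ℝ :=
  if ℓ ∉ J ∧ insert ℓ J = I then (-1 : ℝ) ^ (J.filter (fun j => j < ℓ)).card else 0

/-- The partial derivative `∂f/∂xℓ` at `x`. -/
def pder {n : ℕ} (ℓ : Fin n) (f : Euc n → ℝ) (x : Euc n) : ℝ :=
  fderiv ℝ f x (EuclideanSpace.single ℓ 1)

/-- Coefficients of the exterior derivative `dη` of a (differentiable) `k`-form `η`. -/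
def dcoef {n k : ℕ} (η : Form n k) : Form n (k + 1) := fun x H =>
  ∑ I : MIdx n k, ∑ ℓ : Fin n, msign ℓ I.1 H.1 * pder ℓ (fun y => η y I) x

/-- A smooth compactly supported `k`-form with support contained in `X`. -/
def IsTestForm {n k : ℕ} (X : Set (Euc n)) (η : Form n k) : Prop :=
  (∀ I, ContDiff ℝ (⊤ : ℕ∞) fun x => η x I) ∧
  (∀ I, HasCompactSupport fun x => η x I) ∧
  (∀ I, tsupport (fun x => η x I) ⊆ X)

/-- The weighted inner product `⟨u,v⟩_φ = ∫_X ⟨u,v⟩ e^{−φ} dV` of two `k`-forms. -/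
def wInner {n k : ℕ} (X : Set (Euc n)) (φ : Euc n → ℝ) (u v : Form n k) : ℝ :=
  ∫ x in X, (∑ I : MIdx n k, u x I * v x I) * exp (-φ x)

/-- The squared weighted norm `‖u‖²_φ = ∫_X |u|² e^{−φ} dV` of a `k`-form. -/
def wNormSq {n k : ℕ} (X : Set (Euc n)) (φ : Euc n → ℝ) (u : Form n k) : ℝ :=
  wInner X φ u u

/-- The weighted norm `‖u‖_φ`. -/
def wNorm {n k : ℕ} (X : Set (Euc n)) (φ : Euc n → ℝ) (u : Form n k) : ℝ :=
  Real.sqrt (wNormSq X φ u)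

/-- Membership in `L²_k(X, φ)`: each coefficient is measurable and square-integrable on `X`
with respect to the weight `e^{−φ}`. -/
def MemL2Form {n k : ℕ} (X : Set (Euc n)) (φ : Euc n → ℝ) (u : Form n k) : Prop :=
  ∀ I, AEStronglyMeasurable (fun x => u x I) (volume.restrict X) ∧
    Integrable (fun x => (u x I) ^ 2 * exp (-φ x)) (volume.restrict X)

/-- `w` is the distributional exterior derivative of the `k`-form `u` on `X`:
for every smooth compactly supported `(k+1)`-form `ψ` with support in `X`,
`∫_X ⟨w, ψ⟩ = ∫_X ⟨u, d*₀₀ ψ⟩`, where `d*₀₀` is the unweighted formal adjoint of `d`. -/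
def HasDistD {n k : ℕ} (X : Set (Euc n)) (u : Form n k) (w : Form n (k + 1)) : Prop :=
  ∀ ψ : Form n (k + 1), IsTestForm X ψ →
    (∫ x in X, ∑ H : MIdx n (k + 1), w x H * ψ x H) =
      ∫ x in X, ∑ I : MIdx n k, u x I *
        (-∑ H : MIdx n (k + 1), ∑ ℓ : Fin n, msign ℓ I.1 H.1 * pder ℓ (fun y => ψ y H) x)

/-- `u` belongs to the domain of `d : L²_k(X,φa) ⇸ L²_{k+1}(X,φb)`. -/
def InDomD {n k : ℕ} (X : Set (Euc n)) (φa φb : Euc n → ℝ) (u : Form n k) : Prop :=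
  MemL2Form X φa u ∧ ∃ w : Form n (k + 1), HasDistD X u w ∧ MemL2Form X φb w

/-- `w` is the value of the Hilbert-space adjoint `d*_{φ₂,φ₁}` of
`d : L²_k(X,φ₁) ⇸ L²_{k+1}(X,φ₂)` at `v`; in particular `v ∈ dom d*_{φ₂,φ₁}`. -/
def IsAdjointVal {n k : ℕ} (X : Set (Euc n)) (φ₁ φ₂ : Euc n → ℝ)
    (v : Form n (k + 1)) (w : Form n k) : Prop :=
  MemL2Form X φ₂ v ∧ MemL2Form X φ₁ w ∧
  ∀ (u : Form n k) (du : Form n (k + 1)), MemL2Form X φ₁ u → HasDistD X u du →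
    MemL2Form X φ₂ du → wInner X φ₂ du v = wInner X φ₁ u w

/-- The formal adjoint `d*_{φ₂,φ₁} v = e^{φ₁} d*₀₀ (e^{−φ₂} v)` of the exterior derivative
`d : L²(X,φ₁) ⇸ L²(X,φ₂)`, computed on a (differentiable) `k`-form `v`. -/
def dstarW {n k : ℕ} (φ₁ φ₂ : Euc n → ℝ) (v : Form n k) : Form n (k - 1) := fun x J =>
  -exp (φ₁ x) * ∑ I : MIdx n k, ∑ ℓ : Fin n,
    msign ℓ J.1 I.1 * pder ℓ (fun y => v y I * exp (-φ₂ y)) x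

/-- The operator `δ^φ_ℓ(f) = (∂φ/∂xℓ)·f − ∂f/∂xℓ`. -/
def deltaOp {n : ℕ} (φ : Euc n → ℝ) (ℓ : Fin n) (f : Euc n → ℝ) (x : Euc n) : ℝ :=
  pder ℓ φ x * f x - pder ℓ f x

/-- The Hessian matrix `(∂²φ/∂xᵃ∂xᵇ)(x)`. -/
def hessMat {n : ℕ} (φ : Euc n → ℝ) (x : Euc n) (a b : Fin n) : ℝ :=
  pder a (fun y => pder b φ y) x

end
section Helpers

open MeasureTheory Real Filter
variable {n : ℕ}

noncomputable section

lemma continuous_pder {f : Euc n → ℝ} (hf : ContDiff ℝ (⊤ : ℕ∞) f) (ℓ : Fin n) :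
    Continuous (pder ℓ f) := by
  have h1 : Continuous (fderiv ℝ f) := hf.continuous_fderiv (by simp)
  exact ((ContinuousLinearMap.apply ℝ ℝ (EuclideanSpace.single ℓ 1)).continuous).comp h1

lemma pder_mul {f g : Euc n → ℝ} (hf : ContDiff ℝ (⊤ : ℕ∞) f) (hg : ContDiff ℝ (⊤ : ℕ∞) g)
    (ℓ : Fin n) (x : Euc n) :
    pder ℓ (fun y => f y * g y) x = f x * pder ℓ g x + g x * pder ℓ f x := by
  unfold pder
  rw [fderiv_fun_mul (hf.differentiable (by simp) x)
    (hg.differentiable (by simp) x)]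
  simp

lemma pder_eq_zero_of_eventually_const {f : Euc n → ℝ} {c : ℝ} {x : Euc n}
    (h : f =ᶠ[nhds x] fun _ => c) (ℓ : Fin n) : pder ℓ f x = 0 := by
  unfold pder
  rw [h.fderiv_eq, fderiv_fun_const]
  simp

lemma tsupport_pder_subset {f : Euc n → ℝ} (ℓ : Fin n) :
    tsupport (pder ℓ f) ⊆ tsupport f := by
  apply closure_minimal _ isClosed_closure
  intro x hx
  have : fderiv ℝ f x ≠ 0 := by
    intro h0
    simp only [Function.mem_support, pder, h0] at hx
    exact hx rfl
  exact support_fderiv_subset ℝ this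

lemma msign_sq_le_one (ℓ : Fin n) (J I : Finset (Fin n)) : (msign ℓ J I) ^ 2 ≤ 1 := by
  unfold msign
  split
  · rw [← pow_mul, mul_comm, pow_mul]
    simp
  · norm_num

/-- Cauchy–Schwarz bound for wedge/contraction-type double sums. -/
lemma pder_cs {ι : Type*} [Fintype ι] (g : Euc n → ℝ) (x : Euc n) (B : ℝ)
    (hg : (∑ ℓ : Fin n, (pder ℓ g x) ^ 2) ≤ B)
    (c : ι → Fin n → ℝ) (hc : ∀ i ℓ, (c i ℓ) ^ 2 ≤ 1) (a : ι → ℝ) :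
    (∑ i : ι, ∑ ℓ : Fin n, c i ℓ * pder ℓ g x * a i) ^ 2 ≤
      ((Fintype.card ι) * n) * (B * ∑ i : ι, (a i) ^ 2) := by
  classical
  have hrw : (∑ i : ι, ∑ ℓ : Fin n, c i ℓ * pder ℓ g x * a i)
      = ∑ p : ι × Fin n, (c p.1 p.2 * pder p.2 g x) * a p.1 := by
    rw [Fintype.sum_prod_type]
  rw [hrw]
  have hcs := Finset.sum_mul_sq_le_sq_mul_sq Finset.univ
    (fun p : ι × Fin n => c p.1 p.2 * pder p.2 g x)
    (fun p : ι × Fin n => a p.1)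
  refine le_trans hcs ?_
  have h1 : (∑ p : ι × Fin n, (c p.1 p.2 * pder p.2 g x) ^ 2)
      ≤ (Fintype.card ι) * B := by
    calc (∑ p : ι × Fin n, (c p.1 p.2 * pder p.2 g x) ^ 2)
        ≤ ∑ p : ι × Fin n, (pder p.2 g x) ^ 2 := by
          apply Finset.sum_le_sum
          intro p _
          rw [mul_pow]
          calc (c p.1 p.2) ^ 2 * (pder p.2 g x) ^ 2
              ≤ 1 * (pder p.2 g x) ^ 2 :=
                mul_le_mul_of_nonneg_right (hc p.1 p.2) (sq_nonneg _)
            _ = (pder p.2 g x) ^ 2 := one_mul _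
      _ = (Fintype.card ι) * (∑ ℓ : Fin n, (pder ℓ g x) ^ 2) := by
          rw [Fintype.sum_prod_type]
          simp [Finset.card_univ]
      _ ≤ (Fintype.card ι) * B := by
          apply mul_le_mul_of_nonneg_left hg (Nat.cast_nonneg _)
  have h2 : (∑ p : ι × Fin n, (a p.1) ^ 2)
      = (n : ℝ) * ∑ i : ι, (a i) ^ 2 := by
    rw [Fintype.sum_prod_type]
    simp [Finset.mul_sum, mul_comm]
  rw [h2]
  have hS0 : (0:ℝ) ≤ ∑ i : ι, (a i) ^ 2 :=
    Finset.sum_nonneg (fun _ _ => sq_nonneg _)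
  have hstep := mul_le_mul_of_nonneg_right h1
    (mul_nonneg (Nat.cast_nonneg n) hS0)
  refine le_trans hstep (le_of_eq ?_)
  ring

end
end Helpers
section Helpers2
open MeasureTheory Real Filter
variable {n : ℕ}

/-- A continuous compactly supported function with support in `X`. -/
def TestFn (X : Set (Euc n)) (g : Euc n → ℝ) : Prop :=
  Continuous g ∧ HasCompactSupport g ∧ tsupport g ⊆ X

lemma TestFn.sum {X : Set (Euc n)} {ι : Type*} (s : Finset ι) (f : ι → Euc n → ℝ)
    (h : ∀ i ∈ s, TestFn X (f i)) : TestFn X (fun x => ∑ i ∈ s, f i x) := by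
  classical
  induction s using Finset.induction_on with
  | empty =>
      refine ⟨by simpa using continuous_const, ?_, ?_⟩
      · simp only [Finset.sum_empty]; exact HasCompactSupport.zero
      · have : (tsupport fun _ : Euc n => (0:ℝ)) = ∅ := by
          simp [tsupport]
        simp only [Finset.sum_empty]
        rw [this]
        exact Set.empty_subset _
  | insert a s' ha ih =>
      have h1 := h a (Finset.mem_insert_self a s')
      have h2 := ih (fun i hi => h i (Finset.mem_insert_of_mem hi))
      refine ⟨?_, ?_, ?_⟩
      · simp only [Finset.sum_insert ha]
        exact h1.1.add h2.1
      · simp only [Finset.sum_insert ha]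
        exact h1.2.1.add h2.2.1
      · simp only [Finset.sum_insert ha]
        exact le_trans (tsupport_add _ _) (Set.union_subset h1.2.2 h2.2.2)

lemma TestFn.const_mul {X : Set (Euc n)} {g : Euc n → ℝ} (h : TestFn X g) (c : ℝ) :
    TestFn X (fun x => c * g x) := by
  refine ⟨continuous_const.mul h.1, ?_, ?_⟩
  · exact HasCompactSupport.mul_left h.2.1
  · exact le_trans tsupport_mul_subset_right h.2.2

lemma TestFn.mul_left {X : Set (Euc n)} {f g : Euc n → ℝ} (h : TestFn X g) (hf : Continuous f) :
    TestFn X (fun x => f x * g x) := by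
  refine ⟨hf.mul h.1, HasCompactSupport.mul_left h.2.1, le_trans tsupport_mul_subset_right h.2.2⟩

lemma TestFn.pderFn {X : Set (Euc n)} {g : Euc n → ℝ} (hsm : ContDiff ℝ (⊤ : ℕ∞) g)
    (h : TestFn X g) (ℓ : Fin n) : TestFn X (pder ℓ g) := by
  refine ⟨continuous_pder hsm ℓ, ?_, le_trans (tsupport_pder_subset ℓ) h.2.2⟩
  exact HasCompactSupport.of_support_subset_isCompact h.2.1
    (le_trans subset_closure (tsupport_pder_subset ℓ))

/-- An `L²` function times a test function is integrable. -/
lemma integrable_mul_test {X : Set (Euc n)} (hXo : IsOpen X) {φ' u g : Euc n → ℝ}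
    (hum : AEStronglyMeasurable u (volume.restrict X))
    (hui : Integrable (fun x => (u x) ^ 2 * exp (-φ' x)) (volume.restrict X))
    (hφ : ContinuousOn φ' X) (hg : TestFn X g) :
    Integrable (fun x => u x * g x) (volume.restrict X) := by
  obtain ⟨C₂, hC₂⟩ := hg.2.1.exists_bound_of_continuousOn
    ((continuous_exp.comp_continuousOn (hφ.mono hg.2.2)))
  obtain ⟨C₁, hC₁⟩ := hg.2.1.exists_bound_of_continuousOn hg.1.continuousOn
  set D₁ : ℝ := max C₁ 0 with hD₁
  set D₂ : ℝ := max C₂ 0 with hD₂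
  have hgb : ∀ x, |g x| ≤ D₁ := by
    intro x
    by_cases hx : x ∈ tsupport g
    · exact le_trans (by simpa using hC₁ x hx) (le_max_left _ _)
    · rw [image_eq_zero_of_notMem_tsupport hx]
      simp [hD₁]
  have heb : ∀ x ∈ tsupport g, exp (φ' x) ≤ D₂ := by
    intro x hx
    have h' : exp (φ' x) ≤ C₂ := le_trans (le_abs_self _) (by simpa using hC₂ x hx)
    exact le_trans h' (le_max_left _ _)
  set K := tsupport g with hK
  set bound : Euc n → ℝ := fun x =>
    (u x) ^ 2 * exp (-φ' x) / 2 + (D₁ ^ 2 * D₂ / 2) * K.indicator (fun _ => 1) x with hbd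
  have hKm : MeasurableSet K := (isClosed_tsupport g).measurableSet
  have hboundInt : Integrable bound (volume.restrict X) := by
    apply Integrable.add (hui.div_const 2)
    apply Integrable.const_mul
    rw [integrable_indicator_iff hKm]
    exact integrableOn_const (ne_of_lt (lt_of_le_of_lt (Measure.restrict_apply_le _ _) hg.2.1.measure_lt_top))
  refine Integrable.mono' hboundInt (hum.mul hg.1.aestronglyMeasurable) ?_
  filter_upwards with x
  by_cases hx : x ∈ K
  · have e1 : exp (-φ' x / 2) * exp (-φ' x / 2) = exp (-φ' x) := by
      rw [← exp_add]; ring_nf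
    have e2 : exp (φ' x / 2) * exp (φ' x / 2) = exp (φ' x) := by
      rw [← exp_add]; ring_nf
    have e3 : exp (-φ' x / 2) * exp (φ' x / 2) = 1 := by
      rw [← exp_add]
      ring_nf
      exact exp_zero
    have key : 2 * (|u x| * |g x|) ≤ (u x) ^ 2 * exp (-φ' x) + (g x) ^ 2 * exp (φ' x) := by
      calc 2 * (|u x| * |g x|)
          = 2 * ((|u x| * exp (-φ' x / 2)) * (|g x| * exp (φ' x / 2))) := by
            rw [show (|u x| * exp (-φ' x / 2)) * (|g x| * exp (φ' x / 2))
                = (|u x| * |g x|) * (exp (-φ' x / 2) * exp (φ' x / 2)) by ring, e3, mul_one]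
        _ ≤ (|u x| * exp (-φ' x / 2)) ^ 2 + (|g x| * exp (φ' x / 2)) ^ 2 := by
            have := two_mul_le_add_sq (|u x| * exp (-φ' x / 2)) (|g x| * exp (φ' x / 2))
            linarith
        _ = (u x) ^ 2 * (exp (-φ' x / 2) * exp (-φ' x / 2)) +
              (g x) ^ 2 * (exp (φ' x / 2) * exp (φ' x / 2)) := by
            rw [mul_pow, mul_pow, sq_abs, sq_abs]; ring
        _ = (u x) ^ 2 * exp (-φ' x) + (g x) ^ 2 * exp (φ' x) := by rw [e1, e2]
    have hgsq : (g x) ^ 2 * exp (φ' x) ≤ D₁ ^ 2 * D₂ := by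
      have h1 : (g x) ^ 2 ≤ D₁ ^ 2 := by
        rw [← sq_abs]
        exact pow_le_pow_left₀ (abs_nonneg _) (hgb x) 2
      have h2 : exp (φ' x) ≤ D₂ := heb x hx
      exact mul_le_mul h1 h2 (exp_pos _).le (by positivity)
    rw [hbd]
    simp only [Set.indicator_of_mem hx]
    rw [Real.norm_eq_abs, abs_mul]
    linarith
  · rw [hbd]
    simp only [Set.indicator_of_notMem hx]
    rw [Real.norm_eq_abs, image_eq_zero_of_notMem_tsupport hx]
    simp
    positivity

/-- The product of two `L²`-functions against the weight is integrable. -/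
lemma integrable_mul_L2 {X : Set (Euc n)} (hXo : IsOpen X) {φ' u v : Euc n → ℝ}
    (hφ : ContinuousOn φ' X)
    (hum : AEStronglyMeasurable u (volume.restrict X))
    (hui : Integrable (fun x => (u x) ^ 2 * exp (-φ' x)) (volume.restrict X))
    (hvm : AEStronglyMeasurable v (volume.restrict X))
    (hvi : Integrable (fun x => (v x) ^ 2 * exp (-φ' x)) (volume.restrict X)) :
    Integrable (fun x => u x * v x * exp (-φ' x)) (volume.restrict X) := by
  have hb : Integrable (fun x => ((u x) ^ 2 * exp (-φ' x) + (v x) ^ 2 * exp (-φ' x)) / 2)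
      (volume.restrict X) := (hui.add hvi).div_const 2
  have hem : AEStronglyMeasurable (fun x => exp (-φ' x)) (volume.restrict X) := by
    have h1 : AEMeasurable φ' (volume.restrict X) := hφ.aemeasurable hXo.measurableSet
    exact (Real.measurable_exp.comp_aemeasurable h1.neg).aestronglyMeasurable
  refine Integrable.mono' hb ((hum.mul hvm).mul hem) ?_
  filter_upwards with x
  rw [Real.norm_eq_abs, abs_mul, abs_mul, abs_of_pos (exp_pos _)]
  have h2 : 2 * |u x| * |v x| ≤ (u x) ^ 2 + (v x) ^ 2 := by
    have := two_mul_le_add_sq (|u x|) (|v x|)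
    rw [sq_abs, sq_abs] at this
    exact this
  nlinarith [exp_pos (-φ' x), abs_nonneg (u x), abs_nonneg (v x)]

end Helpers2
section Helpers3
open MeasureTheory Real Filter
variable {n : ℕ}

noncomputable section

lemma aesm_expw {X : Set (Euc n)} (hXo : IsOpen X) {φ' : Euc n → ℝ}
    (hφ : ContinuousOn φ' X) :
    AEStronglyMeasurable (fun x => exp (-φ' x)) (volume.restrict X) :=
  (Real.measurable_exp.comp_aemeasurable
    ((hφ.aemeasurable hXo.measurableSet).neg)).aestronglyMeasurable

/-- The weighted pairing of two `L²` forms is integrable. -/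
lemma integrable_pairing {X : Set (Euc n)} (hXo : IsOpen X) {φ' : Euc n → ℝ}
    (hφ : ContinuousOn φ' X) {m : ℕ} {u v : Form n m}
    (hu : MemL2Form X φ' u) (hv : MemL2Form X φ' v) :
    Integrable (fun x => (∑ I : MIdx n m, u x I * v x I) * exp (-φ' x))
      (volume.restrict X) := by
  have : ∀ x, (∑ I : MIdx n m, u x I * v x I) * exp (-φ' x)
      = ∑ I : MIdx n m, u x I * v x I * exp (-φ' x) := fun x => Finset.sum_mul _ _ _
  refine Integrable.congr (integrable_finset_sum Finset.univ fun I _ => ?_)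
    (Filter.Eventually.of_forall fun x => (this x).symm)
  exact integrable_mul_L2 hXo hφ (hu I).1 (hu I).2 (hv I).1 (hv I).2

/-- Multiplying an `L²` form by a continuous function bounded by 1 keeps it in `L²`. -/
lemma MemL2Form.bdd_mul {X : Set (Euc n)} (hXo : IsOpen X) {φ' : Euc n → ℝ}
    (hφ : ContinuousOn φ' X) {m : ℕ} {u : Form n m} (hu : MemL2Form X φ' u)
    {g : Euc n → ℝ} (hg : Continuous g) (hb : ∀ x, |g x| ≤ 1) :
    MemL2Form X φ' (fun x I => g x * u x I) := by
  intro I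
  have hgu : AEStronglyMeasurable (fun x => g x * u x I) (volume.restrict X) :=
    hg.aestronglyMeasurable.mul (hu I).1
  refine ⟨hgu, ?_⟩
  refine Integrable.mono' (hu I).2
    (((hgu.mul hgu).congr ?_).mul (aesm_expw hXo hφ)) ?_
  · filter_upwards with x
    simp only [Pi.mul_apply]
    ring
  · filter_upwards with x
    have h1 : (g x * u x I) ^ 2 ≤ (u x I) ^ 2 := by
      have hg2 : (g x) ^ 2 ≤ 1 := by nlinarith [abs_nonneg (g x), hb x, sq_abs (g x)]
      have h3 := mul_le_mul_of_nonneg_right hg2 (sq_nonneg (u x I))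
      calc (g x * u x I) ^ 2 = (g x) ^ 2 * (u x I) ^ 2 := by ring
        _ ≤ 1 * (u x I) ^ 2 := h3
        _ = (u x I) ^ 2 := one_mul _
    calc ‖(g x * u x I) ^ 2 * exp (-φ' x)‖ = (g x * u x I) ^ 2 * exp (-φ' x) := by
          rw [Real.norm_eq_abs, abs_of_nonneg (by positivity)]
      _ ≤ (u x I) ^ 2 * exp (-φ' x) := mul_le_mul_of_nonneg_right h1 (exp_pos _).le

/-- Sums of `L²` forms are `L²`. -/
lemma MemL2Form.add' {X : Set (Euc n)} (hXo : IsOpen X) {φ' : Euc n → ℝ}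
    (hφ : ContinuousOn φ' X) {m : ℕ} {u v : Form n m}
    (hu : MemL2Form X φ' u) (hv : MemL2Form X φ' v) :
    MemL2Form X φ' (fun x I => u x I + v x I) := by
  intro I
  have haesm : AEStronglyMeasurable (fun x => u x I + v x I) (volume.restrict X) :=
    (hu I).1.add (hv I).1
  refine ⟨haesm, ?_⟩
  refine Integrable.mono' (((hu I).2.const_mul 2).add ((hv I).2.const_mul 2))
    (((haesm.mul haesm).congr ?_).mul (aesm_expw hXo hφ)) ?_
  · filter_upwards with x
    simp only [Pi.mul_apply]
    ring
  · filter_upwards with x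
    have h1 : (u x I + v x I) ^ 2 ≤ 2 * (u x I) ^ 2 + 2 * (v x I) ^ 2 := by
      nlinarith [sq_nonneg (u x I - v x I)]
    calc ‖(u x I + v x I) ^ 2 * exp (-φ' x)‖ = (u x I + v x I) ^ 2 * exp (-φ' x) := by
          rw [Real.norm_eq_abs, abs_of_nonneg (by positivity)]
      _ ≤ (2 * (u x I) ^ 2 + 2 * (v x I) ^ 2) * exp (-φ' x) :=
          mul_le_mul_of_nonneg_right h1 (exp_pos _).le
      _ = 2 * ((u x I) ^ 2 * exp (-φ' x)) + 2 * ((v x I) ^ 2 * exp (-φ' x)) := by ring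

/-- The wedge `dg ∧ η` of the differential of a function with an `m`-form. -/
def wedgeF {m : ℕ} (g : Euc n → ℝ) (η : Form n m) : Form n (m + 1) := fun x H =>
  ∑ I : MIdx n m, ∑ ℓ : Fin n, msign ℓ I.1 H.1 * pder ℓ g x * η x I

/-- The weighted contraction `e^{-ψ} (dg ⌟ η)` of an `(m+1)`-form. -/
def contrF {m : ℕ} (ψw g : Euc n → ℝ) (η : Form n (m + 1)) : Form n m := fun x J =>
  exp (-ψw x) * ∑ H : MIdx n (m + 1), ∑ ℓ : Fin n, msign ℓ J.1 H.1 * pder ℓ g x * η x H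

lemma aesm_wedge_coef {X : Set (Euc n)} {g : Euc n → ℝ} (hg : ContDiff ℝ (⊤ : ℕ∞) g)
    {m : ℕ} {η : Form n m} (hη : ∀ I, AEStronglyMeasurable (fun x => η x I) (volume.restrict X))
    (H : MIdx n (m + 1)) :
    AEStronglyMeasurable (fun x => wedgeF g η x H) (volume.restrict X) := by
  apply Finset.aestronglyMeasurable_fun_sum
  intro I _
  apply Finset.aestronglyMeasurable_fun_sum
  intro ℓ _
  exact (continuous_const.mul (continuous_pder hg ℓ)).aestronglyMeasurable.mul (hη I)

lemma memL2_wedge {X : Set (Euc n)} (hXo : IsOpen X) {φw ψw g : Euc n → ℝ}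
    (hφw : ContinuousOn φw X) (hg : ContDiff ℝ (⊤ : ℕ∞) g)
    (hgrad : ∀ x ∈ X, (∑ ℓ : Fin n, (pder ℓ g x) ^ 2) ≤ exp (ψw x))
    {m : ℕ} {η : Form n m} (hη : MemL2Form X (fun x => φw x - ψw x) η) :
    MemL2Form X φw (wedgeF g η) := by
  intro H
  have ham := aesm_wedge_coef hg (fun I => (hη I).1) H
  refine ⟨ham, ?_⟩
  set C : ℝ := (Fintype.card (MIdx n m)) * n with hC
  have hbint : Integrable
      (fun x => C * (∑ I : MIdx n m, (η x I) ^ 2 * exp (-(φw x - ψw x))))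
      (volume.restrict X) := by
    apply Integrable.const_mul
    exact integrable_finset_sum Finset.univ fun I _ => (hη I).2
  refine Integrable.mono' hbint
    (((ham.mul ham).congr ?_).mul (aesm_expw hXo hφw)) ?_
  · filter_upwards with x
    simp only [Pi.mul_apply]
    ring
  · rw [ae_restrict_iff' hXo.measurableSet]
    filter_upwards with x hx
    rw [Real.norm_eq_abs, abs_mul, abs_of_pos (exp_pos _), abs_of_nonneg (sq_nonneg _)]
    have key := pder_cs g x (exp (ψw x)) (hgrad x hx)
      (fun (I : MIdx n m) ℓ => msign ℓ I.1 H.1) (fun I ℓ => msign_sq_le_one ℓ I.1 H.1)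
      (fun I => η x I)
    rw [← hC] at key
    have e1 : exp (ψw x) * exp (-φw x) = exp (-(φw x - ψw x)) := by
      rw [← exp_add]; ring_nf
    calc (wedgeF g η x H) ^ 2 * exp (-φw x)
        ≤ (C * (exp (ψw x) * ∑ I : MIdx n m, (η x I) ^ 2)) * exp (-φw x) := by
          apply mul_le_mul_of_nonneg_right _ (exp_pos _).le
          exact key
      _ = C * (∑ I : MIdx n m, (η x I) ^ 2 * (exp (ψw x) * exp (-φw x))) := by
          simp only [Finset.mul_sum, Finset.sum_mul]
          exact Finset.sum_congr rfl fun I _ => by ring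
      _ = C * (∑ I : MIdx n m, (η x I) ^ 2 * exp (-(φw x - ψw x))) := by rw [e1]

lemma memL2_contr {X : Set (Euc n)} (hXo : IsOpen X) {φw ψw g : Euc n → ℝ}
    (hφw2 : ContinuousOn (fun x => φw x - 2 * ψw x) X) (hψw : ContinuousOn ψw X)
    (hg : ContDiff ℝ (⊤ : ℕ∞) g)
    (hgrad : ∀ x ∈ X, (∑ ℓ : Fin n, (pder ℓ g x) ^ 2) ≤ exp (ψw x))
    {m : ℕ} {η : Form n (m + 1)} (hη : MemL2Form X (fun x => φw x - ψw x) η) :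
    MemL2Form X (fun x => φw x - 2 * ψw x) (contrF ψw g η) := by
  intro J
  have ham0 : AEStronglyMeasurable
      (fun x => ∑ H : MIdx n (m+1), ∑ ℓ : Fin n, msign ℓ J.1 H.1 * pder ℓ g x * η x H)
      (volume.restrict X) := by
    apply Finset.aestronglyMeasurable_fun_sum
    intro H _
    apply Finset.aestronglyMeasurable_fun_sum
    intro ℓ _
    exact (continuous_const.mul (continuous_pder hg ℓ)).aestronglyMeasurable.mul (hη H).1
  have ham : AEStronglyMeasurable (fun x => contrF ψw g η x J) (volume.restrict X) :=
    (aesm_expw hXo hψw).mul ham0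
  refine ⟨ham, ?_⟩
  set C : ℝ := (Fintype.card (MIdx n (m+1))) * n with hC
  have hbint : Integrable
      (fun x => C * (∑ H : MIdx n (m+1), (η x H) ^ 2 * exp (-(φw x - ψw x))))
      (volume.restrict X) := by
    apply Integrable.const_mul
    exact integrable_finset_sum Finset.univ fun H _ => (hη H).2
  refine Integrable.mono' hbint
    (((ham.mul ham).congr ?_).mul (aesm_expw hXo hφw2)) ?_
  · filter_upwards with x
    simp only [Pi.mul_apply]
    ring
  · rw [ae_restrict_iff' hXo.measurableSet]
    filter_upwards with x hx
    rw [Real.norm_eq_abs, abs_mul, abs_of_pos (exp_pos _), abs_of_nonneg (sq_nonneg _)]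
    have key := pder_cs g x (exp (ψw x)) (hgrad x hx)
      (fun (H : MIdx n (m+1)) ℓ => msign ℓ J.1 H.1) (fun H ℓ => msign_sq_le_one ℓ J.1 H.1)
      (fun H => η x H)
    rw [← hC] at key
    have e2 : exp (-ψw x) * exp (-ψw x) * exp (ψw x) * exp (-(φw x - 2 * ψw x))
        = exp (-(φw x - ψw x)) := by
      rw [← exp_add, ← exp_add, ← exp_add]; ring_nf
    have hsq : (contrF ψw g η x J) ^ 2 = exp (-ψw x) * exp (-ψw x) *
        (∑ H : MIdx n (m+1), ∑ ℓ : Fin n, msign ℓ J.1 H.1 * pder ℓ g x * η x H) ^ 2 := by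
      unfold contrF
      ring
    rw [hsq]
    calc exp (-ψw x) * exp (-ψw x) *
          (∑ H : MIdx n (m+1), ∑ ℓ : Fin n, msign ℓ J.1 H.1 * pder ℓ g x * η x H) ^ 2 *
          exp (-(φw x - 2 * ψw x))
        ≤ exp (-ψw x) * exp (-ψw x) *
            (C * (exp (ψw x) * ∑ H : MIdx n (m+1), (η x H) ^ 2)) *
            exp (-(φw x - 2 * ψw x)) := by
          apply mul_le_mul_of_nonneg_right _ (exp_pos _).le
          apply mul_le_mul_of_nonneg_left key (by positivity)
      _ = C * (∑ H : MIdx n (m+1), (η x H) ^ 2 *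
            (exp (-ψw x) * exp (-ψw x) * exp (ψw x) * exp (-(φw x - 2 * ψw x)))) := by
          simp only [Finset.mul_sum, Finset.sum_mul]
          exact Finset.sum_congr rfl fun H _ => by ring
      _ = C * (∑ H : MIdx n (m+1), (η x H) ^ 2 * exp (-(φw x - ψw x))) := by rw [e2]

end
end Helpers3
section Helpers4
open MeasureTheory Real Filter Topology
variable {n : ℕ}

/-- Dominated convergence for weighted norms of forms vanishing pointwise eventually. -/
lemma tendsto_wNorm_zero {X : Set (Euc n)} (hXo : IsOpen X) {m : ℕ}
    (u : ℕ → Form n m) (φ' : Euc n → ℝ)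
    (hmeas : ∀ ν, AEStronglyMeasurable
      (fun x => (∑ I : MIdx n m, u ν x I * u ν x I) * exp (-φ' x)) (volume.restrict X))
    (bound : Euc n → ℝ) (hbi : Integrable bound (volume.restrict X))
    (hb : ∀ ν, ∀ x ∈ X, (∑ I : MIdx n m, u ν x I * u ν x I) * exp (-φ' x) ≤ bound x)
    (hptw : ∀ x ∈ X, ∀ᶠ ν in atTop, ∀ I, u ν x I = 0) :
    Tendsto (fun ν => wNorm X φ' (u ν)) atTop (nhds 0) := by
  have hsq : Tendsto (fun ν => wNormSq X φ' (u ν)) atTop (nhds 0) := by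
    have h0 : (0 : ℝ) = ∫ x in X, (0 : ℝ) := by simp
    rw [h0]
    apply tendsto_integral_of_dominated_convergence bound hmeas hbi
    · intro ν
      rw [ae_restrict_iff' hXo.measurableSet]
      filter_upwards with x hx
      have hnn : 0 ≤ (∑ I : MIdx n m, u ν x I * u ν x I) * exp (-φ' x) := by
        apply mul_nonneg _ (exp_pos _).le
        exact Finset.sum_nonneg fun I _ => mul_self_nonneg _
      rw [Real.norm_eq_abs, abs_of_nonneg hnn]
      exact hb ν x hx
    · rw [ae_restrict_iff' hXo.measurableSet]
      filter_upwards with x hx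
      apply Tendsto.congr' _ tendsto_const_nhds
      filter_upwards [hptw x hx] with ν hν
      simp only [hν]
      simp
  have := hsq.sqrt
  rw [Real.sqrt_zero] at this
  exact this

/-- Eventually the cutoffs are `1` near a given point of `X`, with vanishing derivative. -/
lemma eventually_cutoff_one {X : Set (Euc n)} (hXo : IsOpen X)
    (ρ : ℕ → Euc n → ℝ)
    (hρK : ∀ K : Set (Euc n), IsCompact K → K ⊆ X →
      ∃ ν₀, ∀ ν ≥ ν₀, ∀ x ∈ K, ρ ν x = 1)
    {x : Euc n} (hx : x ∈ X) :
    ∀ᶠ ν in atTop, ρ ν x = 1 ∧ ∀ ℓ : Fin n, pder ℓ (ρ ν) x = 0 := by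
  obtain ⟨ε, hε, hball⟩ := Metric.isOpen_iff.1 hXo x hx
  have hKc : IsCompact (Metric.closedBall x (ε / 2)) := isCompact_closedBall x (ε / 2)
  have hKX : Metric.closedBall x (ε / 2) ⊆ X :=
    le_trans (Metric.closedBall_subset_ball (by linarith)) hball
  obtain ⟨ν₀, hν₀⟩ := hρK _ hKc hKX
  filter_upwards [eventually_ge_atTop ν₀] with ν hν
  have hmem : x ∈ Metric.closedBall x (ε / 2) := Metric.mem_closedBall_self (by linarith)
  refine ⟨hν₀ ν hν x hmem, fun ℓ => ?_⟩
  apply pder_eq_zero_of_eventually_const (c := 1)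
  have hopen : Metric.ball x (ε / 2) ∈ 𝓝 x := Metric.ball_mem_nhds x (by linarith)
  filter_upwards [hopen] with y hy
  exact hν₀ ν hν y (Metric.ball_subset_closedBall hy)

end Helpers4
section Helpers5
open MeasureTheory Real Filter Topology
variable {n : ℕ}

lemma mul_sum2 {α β : Type*} [Fintype α] [Fintype β] (c : ℝ) (f : α → β → ℝ) :
    c * ∑ a : α, ∑ b : β, f a b = ∑ a : α, ∑ b : β, c * f a b := by
  rw [Finset.mul_sum]
  exact Finset.sum_congr rfl fun a _ => Finset.mul_sum _ _ _

/-- Leibniz rule for the distributional exterior derivative against a smooth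
compactly supported multiplier. -/
lemma hasDistD_mul {X : Set (Euc n)} (hXo : IsOpen X) {m : ℕ} {u : Form n m}
    {du : Form n (m + 1)} {φa φb φc : Euc n → ℝ}
    (hφa : ContinuousOn φa X) (hφb : ContinuousOn φb X) (hφc : ContinuousOn φc X)
    (hu : MemL2Form X φa u) (hdu : HasDistD X u du) (hduL2 : MemL2Form X φb du)
    {g : Euc n → ℝ} (hgsm : ContDiff ℝ (⊤ : ℕ∞) g) (hgc : HasCompactSupport g)
    (hgs : tsupport g ⊆ X)
    (hwL2 : MemL2Form X φc (wedgeF g u)) :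
    HasDistD X (fun x I => g x * u x I) (fun x H => g x * du x H + wedgeF g u x H) := by
  intro ψ' hψ'
  beta_reduce
  have hψT : ∀ H, TestFn X (fun x => ψ' x H) :=
    fun H => ⟨(hψ'.1 H).continuous, hψ'.2.1 H, hψ'.2.2 H⟩
  have hθtest : IsTestForm X (fun x H => g x * ψ' x H) := by
    refine ⟨fun H => hgsm.mul (hψ'.1 H), fun H => ?_, fun H => ?_⟩
    · exact hgc.mul_right
    · exact le_trans tsupport_mul_subset_left hgs
  have h0 := hdu (fun x H => g x * ψ' x H) hθtest
  have hp : ∀ (H : MIdx n (m + 1)) (ℓ : Fin n) (x : Euc n),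
      pder ℓ (fun y => g y * ψ' y H) x
        = g x * pder ℓ (fun y => ψ' y H) x + ψ' x H * pder ℓ g x :=
    fun H ℓ x => pder_mul hgsm (hψ'.1 H) ℓ x
  simp only [hp] at h0
  have hIntP1 : Integrable (fun x => ∑ H : MIdx n (m + 1), du x H * (g x * ψ' x H))
      (volume.restrict X) :=
    integrable_finset_sum _ fun H _ =>
      integrable_mul_test hXo (hduL2 H).1 (hduL2 H).2 hφb ((hψT H).mul_left hgsm.continuous)
  have hIntP2 : Integrable (fun x => ∑ H : MIdx n (m + 1), wedgeF g u x H * ψ' x H)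
      (volume.restrict X) :=
    integrable_finset_sum _ fun H _ =>
      integrable_mul_test hXo (hwL2 H).1 (hwL2 H).2 hφc (hψT H)
  have htc : ∀ I : MIdx n m, TestFn X (fun x =>
      -∑ H : MIdx n (m + 1), ∑ ℓ : Fin n, msign ℓ I.1 H.1 * pder ℓ (fun y => ψ' y H) x) := by
    intro I
    have h1 : TestFn X (fun x =>
        ∑ H : MIdx n (m + 1), ∑ ℓ : Fin n,
          (-1 : ℝ) * (msign ℓ I.1 H.1 * pder ℓ (fun y => ψ' y H) x)) := by
      refine TestFn.sum _ _ fun H _ => TestFn.sum _ _ fun ℓ _ => ?_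
      exact ((TestFn.pderFn (hψ'.1 H) (hψT H) ℓ).const_mul (msign ℓ I.1 H.1)).const_mul (-1)
    have heq : (fun x =>
        -∑ H : MIdx n (m + 1), ∑ ℓ : Fin n, msign ℓ I.1 H.1 * pder ℓ (fun y => ψ' y H) x)
        = (fun x => ∑ H : MIdx n (m + 1), ∑ ℓ : Fin n,
          (-1 : ℝ) * (msign ℓ I.1 H.1 * pder ℓ (fun y => ψ' y H) x)) := by
      funext x
      rw [← mul_sum2]
      ring
    rw [heq]
    exact h1
  have hIntB1 : Integrable (fun x => ∑ I : MIdx n m, (g x * u x I) *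
      (-∑ H : MIdx n (m + 1), ∑ ℓ : Fin n, msign ℓ I.1 H.1 * pder ℓ (fun y => ψ' y H) x))
      (volume.restrict X) := by
    refine integrable_finset_sum _ fun I _ => ?_
    have hbase := integrable_mul_test hXo (hu I).1 (hu I).2 hφa
      ((htc I).mul_left hgsm.continuous)
    refine hbase.congr (Filter.Eventually.of_forall fun x => ?_)
    ring
  have hL : ∀ x, (∑ H : MIdx n (m + 1), (g x * du x H + wedgeF g u x H) * ψ' x H)
      = (∑ H : MIdx n (m + 1), du x H * (g x * ψ' x H))
        + (∑ H : MIdx n (m + 1), wedgeF g u x H * ψ' x H) := by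
    intro x
    rw [← Finset.sum_add_distrib]
    exact Finset.sum_congr rfl fun H _ => by ring
  have hB : ∀ x, (∑ I : MIdx n m, u x I *
        (-∑ H : MIdx n (m + 1), ∑ ℓ : Fin n, msign ℓ I.1 H.1 *
          (g x * pder ℓ (fun y => ψ' y H) x + ψ' x H * pder ℓ g x)))
      = (∑ I : MIdx n m, (g x * u x I) *
          (-∑ H : MIdx n (m + 1), ∑ ℓ : Fin n, msign ℓ I.1 H.1 * pder ℓ (fun y => ψ' y H) x))
        - (∑ H : MIdx n (m + 1), wedgeF g u x H * ψ' x H) := by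
    intro x
    have hsplit : ∀ I : MIdx n m,
        (∑ H : MIdx n (m + 1), ∑ ℓ : Fin n, msign ℓ I.1 H.1 *
          (g x * pder ℓ (fun y => ψ' y H) x + ψ' x H * pder ℓ g x))
        = (∑ H : MIdx n (m + 1), ∑ ℓ : Fin n,
            msign ℓ I.1 H.1 * (g x * pder ℓ (fun y => ψ' y H) x))
          + (∑ H : MIdx n (m + 1), ∑ ℓ : Fin n,
            msign ℓ I.1 H.1 * (ψ' x H * pder ℓ g x)) := by
      intro I
      rw [← Finset.sum_add_distrib]
      refine Finset.sum_congr rfl fun H _ => ?_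
      rw [← Finset.sum_add_distrib]
      exact Finset.sum_congr rfl fun ℓ _ => by ring
    simp only [hsplit]
    have hexp : (∑ I : MIdx n m, u x I *
        (-((∑ H : MIdx n (m + 1), ∑ ℓ : Fin n,
            msign ℓ I.1 H.1 * (g x * pder ℓ (fun y => ψ' y H) x))
          + (∑ H : MIdx n (m + 1), ∑ ℓ : Fin n,
            msign ℓ I.1 H.1 * (ψ' x H * pder ℓ g x)))))
      = (∑ I : MIdx n m, u x I *
          (-∑ H : MIdx n (m + 1), ∑ ℓ : Fin n,
            msign ℓ I.1 H.1 * (g x * pder ℓ (fun y => ψ' y H) x)))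
        + (∑ I : MIdx n m, u x I *
          (-∑ H : MIdx n (m + 1), ∑ ℓ : Fin n,
            msign ℓ I.1 H.1 * (ψ' x H * pder ℓ g x))) := by
      rw [← Finset.sum_add_distrib]
      exact Finset.sum_congr rfl fun I _ => by ring
    rw [hexp]
    have h1 : (∑ I : MIdx n m, u x I *
        (-∑ H : MIdx n (m + 1), ∑ ℓ : Fin n,
          msign ℓ I.1 H.1 * (g x * pder ℓ (fun y => ψ' y H) x)))
        = (∑ I : MIdx n m, (g x * u x I) *
          (-∑ H : MIdx n (m + 1), ∑ ℓ : Fin n,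
            msign ℓ I.1 H.1 * pder ℓ (fun y => ψ' y H) x)) := by
      refine Finset.sum_congr rfl fun I _ => ?_
      have hg1 : (∑ H : MIdx n (m + 1), ∑ ℓ : Fin n,
          msign ℓ I.1 H.1 * (g x * pder ℓ (fun y => ψ' y H) x))
          = g x * ∑ H : MIdx n (m + 1), ∑ ℓ : Fin n,
            msign ℓ I.1 H.1 * pder ℓ (fun y => ψ' y H) x := by
        rw [mul_sum2]
        exact Finset.sum_congr rfl fun H _ => Finset.sum_congr rfl fun ℓ _ => by ring
      rw [hg1]
      ring
    have h2 : (∑ I : MIdx n m, u x I *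
        (-∑ H : MIdx n (m + 1), ∑ ℓ : Fin n,
          msign ℓ I.1 H.1 * (ψ' x H * pder ℓ g x)))
        = -(∑ H : MIdx n (m + 1), wedgeF g u x H * ψ' x H) := by
      unfold wedgeF
      simp only [mul_neg, Finset.sum_neg_distrib]
      rw [neg_inj]
      have lhs2 : (∑ I : MIdx n m, u x I *
          ∑ H : MIdx n (m + 1), ∑ ℓ : Fin n, msign ℓ I.1 H.1 * (ψ' x H * pder ℓ g x))
          = ∑ I : MIdx n m, ∑ H : MIdx n (m + 1), ∑ ℓ : Fin n,
            u x I * (msign ℓ I.1 H.1 * (ψ' x H * pder ℓ g x)) :=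
        Finset.sum_congr rfl fun I _ => mul_sum2 _ _
      rw [lhs2]
      have rhs2 : (∑ H : MIdx n (m + 1),
          (∑ I : MIdx n m, ∑ ℓ : Fin n, msign ℓ I.1 H.1 * pder ℓ g x * u x I) * ψ' x H)
          = ∑ H : MIdx n (m + 1), ∑ I : MIdx n m, ∑ ℓ : Fin n,
            (msign ℓ I.1 H.1 * pder ℓ g x * u x I) * ψ' x H :=
        Finset.sum_congr rfl fun H _ => by
          rw [Finset.sum_mul]
          exact Finset.sum_congr rfl fun I _ => Finset.sum_mul _ _ _
      rw [rhs2, Finset.sum_comm]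
      exact Finset.sum_congr rfl fun I _ => Finset.sum_congr rfl fun H _ =>
        Finset.sum_congr rfl fun ℓ _ => by ring
    rw [h1, h2]
    ring
  calc (∫ x in X, ∑ H : MIdx n (m + 1), (g x * du x H + wedgeF g u x H) * ψ' x H)
      = ∫ x in X, ((∑ H : MIdx n (m + 1), du x H * (g x * ψ' x H))
          + (∑ H : MIdx n (m + 1), wedgeF g u x H * ψ' x H)) :=
        integral_congr_ae (Filter.Eventually.of_forall hL)
    _ = (∫ x in X, ∑ H : MIdx n (m + 1), du x H * (g x * ψ' x H))
          + (∫ x in X, ∑ H : MIdx n (m + 1), wedgeF g u x H * ψ' x H) :=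
        integral_add hIntP1 hIntP2
    _ = (∫ x in X, ∑ I : MIdx n m, u x I *
          (-∑ H : MIdx n (m + 1), ∑ ℓ : Fin n, msign ℓ I.1 H.1 *
            (g x * pder ℓ (fun y => ψ' y H) x + ψ' x H * pder ℓ g x)))
          + (∫ x in X, ∑ H : MIdx n (m + 1), wedgeF g u x H * ψ' x H) := by rw [h0]
    _ = (∫ x in X, ((∑ I : MIdx n m, (g x * u x I) *
            (-∑ H : MIdx n (m + 1), ∑ ℓ : Fin n,
              msign ℓ I.1 H.1 * pder ℓ (fun y => ψ' y H) x))
          - (∑ H : MIdx n (m + 1), wedgeF g u x H * ψ' x H)))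
          + (∫ x in X, ∑ H : MIdx n (m + 1), wedgeF g u x H * ψ' x H) := by
        rw [integral_congr_ae (Filter.Eventually.of_forall hB)]
    _ = ((∫ x in X, ∑ I : MIdx n m, (g x * u x I) *
            (-∑ H : MIdx n (m + 1), ∑ ℓ : Fin n,
              msign ℓ I.1 H.1 * pder ℓ (fun y => ψ' y H) x))
          - (∫ x in X, ∑ H : MIdx n (m + 1), wedgeF g u x H * ψ' x H))
          + (∫ x in X, ∑ H : MIdx n (m + 1), wedgeF g u x H * ψ' x H) := by
        rw [integral_sub hIntB1 hIntP2]
    _ = ∫ x in X, ∑ I : MIdx n m, (g x * u x I) *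
          (-∑ H : MIdx n (m + 1), ∑ ℓ : Fin n,
            msign ℓ I.1 H.1 * pder ℓ (fun y => ψ' y H) x) := by ring

end Helpers5
section Helpers6
open MeasureTheory Real Filter Topology
variable {n : ℕ}

lemma MemL2Form.of_weight_eq {X : Set (Euc n)} {φ' φ'' : Euc n → ℝ} {m : ℕ} {u : Form n m}
    (h : MemL2Form X φ' u) (heq : ∀ x, φ' x = φ'' x) : MemL2Form X φ'' u := fun I =>
  ⟨(h I).1, (h I).2.congr (Filter.Eventually.of_forall fun x => by simp only [heq x])⟩

lemma MemL2Form.sub' {X : Set (Euc n)} (hXo : IsOpen X) {φ' : Euc n → ℝ}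
    (hφ : ContinuousOn φ' X) {m : ℕ} {u v : Form n m}
    (hu : MemL2Form X φ' u) (hv : MemL2Form X φ' v) :
    MemL2Form X φ' (fun x I => u x I - v x I) := by
  have hvneg : MemL2Form X φ' (fun x I => -(v x I)) := fun I =>
    ⟨(hv I).1.neg, (hv I).2.congr (Filter.Eventually.of_forall fun x => by ring_nf)⟩
  have := MemL2Form.add' hXo hφ hu hvneg
  intro I
  exact ⟨((this I).1).congr (Filter.Eventually.of_forall fun x => by ring),
    ((this I).2).congr (Filter.Eventually.of_forall fun x => by ring_nf)⟩

/-- The key computation: the adjoint applied to a cutoff times a form. -/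
lemma isAdjointVal_mul {X : Set (Euc n)} (hXo : IsOpen X) {φ ψ : Euc n → ℝ}
    (hφψ : ContinuousOn (fun x => φ x - ψ x) X)
    (hφ2ψ : ContinuousOn (fun x => φ x - 2 * ψ x) X)
    (hψc : ContinuousOn ψ X)
    {g : Euc n → ℝ} (hgsm : ContDiff ℝ (⊤ : ℕ∞) g) (hgc : HasCompactSupport g)
    (hgs : tsupport g ⊆ X) (hgb : ∀ x, |g x| ≤ 1)
    (hgrad : ∀ x ∈ X, (∑ ℓ : Fin n, (pder ℓ g x) ^ 2) ≤ exp (ψ x))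
    {k : ℕ} {η : Form n (k + 1)} {w : Form n k}
    (hw : IsAdjointVal X (fun x => φ x - 2 * ψ x) (fun x => φ x - ψ x) η w) :
    IsAdjointVal X (fun x => φ x - 2 * ψ x) (fun x => φ x - ψ x)
      (fun x I => g x * η x I) (fun x J => g x * w x J - contrF ψ g η x J) := by
  obtain ⟨hηL2, hwL2, hadj⟩ := hw
  have hcontrL2 : MemL2Form X (fun x => φ x - 2 * ψ x) (contrF ψ g η) :=
    memL2_contr hXo hφ2ψ hψc hgsm hgrad hηL2
  refine ⟨MemL2Form.bdd_mul hXo hφψ hηL2 hgsm.continuous hgb, ?_, ?_⟩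
  · exact MemL2Form.sub' hXo hφ2ψ
      (MemL2Form.bdd_mul hXo hφ2ψ hwL2 hgsm.continuous hgb) hcontrL2
  intro u du hu hdu hduL2
  -- wedge of g with u, square-integrable with weight φ - ψ
  have huw : MemL2Form X (fun x => (φ x - ψ x) - ψ x) u :=
    hu.of_weight_eq (fun x => by ring)
  have hwedgeL2 : MemL2Form X (fun x => φ x - ψ x) (wedgeF g u) :=
    memL2_wedge hXo hφψ hgsm hgrad huw
  have hguL2 : MemL2Form X (fun x => φ x - 2 * ψ x) (fun x I => g x * u x I) :=
    MemL2Form.bdd_mul hXo hφ2ψ hu hgsm.continuous hgb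
  have hgduL2 : MemL2Form X (fun x => φ x - ψ x) (fun x H => g x * du x H) :=
    MemL2Form.bdd_mul hXo hφψ hduL2 hgsm.continuous hgb
  have hDL2 : MemL2Form X (fun x => φ x - ψ x)
      (fun x H => g x * du x H + wedgeF g u x H) :=
    MemL2Form.add' hXo hφψ hgduL2 hwedgeL2
  have hD : HasDistD X (fun x I => g x * u x I)
      (fun x H => g x * du x H + wedgeF g u x H) :=
    hasDistD_mul hXo hφ2ψ hφψ hφψ hu hdu hduL2 hgsm hgc hgs hwedgeL2
  have happ := hadj _ _ hguL2 hD hDL2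
  -- split the left side of happ
  have hsplit : wInner X (fun x => φ x - ψ x)
      (fun x H => g x * du x H + wedgeF g u x H) η
      = wInner X (fun x => φ x - ψ x) (fun x H => g x * du x H) η
        + wInner X (fun x => φ x - ψ x) (wedgeF g u) η := by
    unfold wInner
    rw [← integral_add (integrable_pairing hXo hφψ hgduL2 hηL2)
      (integrable_pairing hXo hφψ hwedgeL2 hηL2)]
    refine integral_congr_ae (Filter.Eventually.of_forall fun x => ?_)
    beta_reduce
    rw [← add_mul, ← Finset.sum_add_distrib]
    exact congrArg (· * exp (-(φ x - ψ x)))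
      (Finset.sum_congr rfl fun H _ => by ring)
  -- g moves across the pairing
  have hmove : wInner X (fun x => φ x - ψ x) (fun x H => g x * du x H) η
      = wInner X (fun x => φ x - ψ x) du (fun x I => g x * η x I) := by
    unfold wInner
    refine integral_congr_ae (Filter.Eventually.of_forall fun x => ?_)
    beta_reduce
    exact congrArg (· * exp (-(φ x - ψ x)))
      (Finset.sum_congr rfl fun H _ => by ring)
  -- wedge pairs with η like u pairs with the contraction
  have hwc : wInner X (fun x => φ x - ψ x) (wedgeF g u) η
      = wInner X (fun x => φ x - 2 * ψ x) u (contrF ψ g η) := by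
    unfold wInner wedgeF contrF
    refine integral_congr_ae (Filter.Eventually.of_forall fun x => ?_)
    beta_reduce
    have eexp : exp (-ψ x) * exp (-(φ x - 2 * ψ x)) = exp (-(φ x - ψ x)) := by
      rw [← exp_add]; ring_nf
    have lhs1 : (∑ H : MIdx n (k + 1),
        (∑ J : MIdx n k, ∑ ℓ : Fin n, msign ℓ J.1 H.1 * pder ℓ g x * u x J) * η x H) *
          exp (-(φ x - ψ x))
        = ∑ H : MIdx n (k + 1), ∑ J : MIdx n k, ∑ ℓ : Fin n,
            msign ℓ J.1 H.1 * pder ℓ g x * u x J * η x H * exp (-(φ x - ψ x)) := by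
      simp only [Finset.sum_mul]
    have rhs1 : (∑ J : MIdx n k, u x J *
        (exp (-ψ x) * ∑ H : MIdx n (k + 1), ∑ ℓ : Fin n,
          msign ℓ J.1 H.1 * pder ℓ g x * η x H)) * exp (-(φ x - 2 * ψ x))
        = ∑ J : MIdx n k, ∑ H : MIdx n (k + 1), ∑ ℓ : Fin n,
            u x J * (exp (-ψ x) * (msign ℓ J.1 H.1 * pder ℓ g x * η x H)) *
              exp (-(φ x - 2 * ψ x)) := by
      simp only [Finset.mul_sum, Finset.sum_mul]
    rw [lhs1, rhs1, Finset.sum_comm]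
    refine Finset.sum_congr rfl fun J _ => Finset.sum_congr rfl fun H _ =>
      Finset.sum_congr rfl fun ℓ _ => ?_
    rw [← eexp]
    ring
  -- g moves across the pairing with w
  have hmove2 : wInner X (fun x => φ x - 2 * ψ x) (fun x I => g x * u x I) w
      = wInner X (fun x => φ x - 2 * ψ x) u (fun x J => g x * w x J) := by
    unfold wInner
    refine integral_congr_ae (Filter.Eventually.of_forall fun x => ?_)
    beta_reduce
    exact congrArg (· * exp (-(φ x - 2 * ψ x)))
      (Finset.sum_congr rfl fun J _ => by ring)
  -- split the right side of the goal
  have hsplit2 : wInner X (fun x => φ x - 2 * ψ x) u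
      (fun x J => g x * w x J - contrF ψ g η x J)
      = wInner X (fun x => φ x - 2 * ψ x) u (fun x J => g x * w x J)
        - wInner X (fun x => φ x - 2 * ψ x) u (contrF ψ g η) := by
    unfold wInner
    rw [← integral_sub
      (integrable_pairing hXo hφ2ψ hu
        (MemL2Form.bdd_mul hXo hφ2ψ hwL2 hgsm.continuous hgb))
      (integrable_pairing hXo hφ2ψ hu hcontrL2)]
    refine integral_congr_ae (Filter.Eventually.of_forall fun x => ?_)
    beta_reduce
    rw [← sub_mul, ← Finset.sum_sub_distrib]
    exact congrArg (· * exp (-(φ x - 2 * ψ x)))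
      (Finset.sum_congr rfl fun J _ => by ring)
  rw [hsplit, hmove, hwc] at happ
  -- happ : wInner du (gη) + wInner u contr = wInner (gu) w
  rw [hsplit2, ← hmove2]
  linarith [happ]

end Helpers6
section Helpers7
open MeasureTheory Real Filter Topology
variable {n : ℕ}

/-- Pointwise bound for wedge coefficients. -/
lemma wedge_sq_bound {φw ψw g : Euc n → ℝ} {x : Euc n}
    (hgx : (∑ ℓ : Fin n, (pder ℓ g x) ^ 2) ≤ exp (ψw x))
    {m : ℕ} (η : Form n m) (H : MIdx n (m + 1)) :
    (wedgeF g η x H) ^ 2 * exp (-φw x) ≤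
      ((Fintype.card (MIdx n m)) * n) * (∑ I : MIdx n m, (η x I) ^ 2 * exp (-(φw x - ψw x))) := by
  have key := pder_cs g x (exp (ψw x)) hgx
    (fun (I : MIdx n m) ℓ => msign ℓ I.1 H.1) (fun I ℓ => msign_sq_le_one ℓ I.1 H.1)
    (fun I => η x I)
  have e1 : exp (ψw x) * exp (-φw x) = exp (-(φw x - ψw x)) := by
    rw [← exp_add]; ring_nf
  calc (wedgeF g η x H) ^ 2 * exp (-φw x)
      ≤ (((Fintype.card (MIdx n m)) * n) * (exp (ψw x) * ∑ I : MIdx n m, (η x I) ^ 2)) *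
          exp (-φw x) := by
        apply mul_le_mul_of_nonneg_right _ (exp_pos _).le
        exact key
    _ = ((Fintype.card (MIdx n m)) * n) *
          (∑ I : MIdx n m, (η x I) ^ 2 * (exp (ψw x) * exp (-φw x))) := by
        simp only [Finset.mul_sum, Finset.sum_mul]
        exact Finset.sum_congr rfl fun I _ => by ring
    _ = ((Fintype.card (MIdx n m)) * n) *
          (∑ I : MIdx n m, (η x I) ^ 2 * exp (-(φw x - ψw x))) := by rw [e1]

/-- Pointwise bound for contraction coefficients. -/
lemma contr_sq_bound {φw ψw g : Euc n → ℝ} {x : Euc n}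
    (hgx : (∑ ℓ : Fin n, (pder ℓ g x) ^ 2) ≤ exp (ψw x))
    {m : ℕ} (η : Form n (m + 1)) (J : MIdx n m) :
    (contrF ψw g η x J) ^ 2 * exp (-(φw x - 2 * ψw x)) ≤
      ((Fintype.card (MIdx n (m + 1))) * n) *
        (∑ H : MIdx n (m + 1), (η x H) ^ 2 * exp (-(φw x - ψw x))) := by
  have key := pder_cs g x (exp (ψw x)) hgx
    (fun (H : MIdx n (m + 1)) ℓ => msign ℓ J.1 H.1) (fun H ℓ => msign_sq_le_one ℓ J.1 H.1)
    (fun H => η x H)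
  have e2 : exp (-ψw x) * exp (-ψw x) * exp (ψw x) * exp (-(φw x - 2 * ψw x))
      = exp (-(φw x - ψw x)) := by
    rw [← exp_add, ← exp_add, ← exp_add]; ring_nf
  have hsq : (contrF ψw g η x J) ^ 2 = exp (-ψw x) * exp (-ψw x) *
      (∑ H : MIdx n (m + 1), ∑ ℓ : Fin n, msign ℓ J.1 H.1 * pder ℓ g x * η x H) ^ 2 := by
    unfold contrF
    ring
  rw [hsq]
  calc exp (-ψw x) * exp (-ψw x) *
        (∑ H : MIdx n (m + 1), ∑ ℓ : Fin n, msign ℓ J.1 H.1 * pder ℓ g x * η x H) ^ 2 *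
        exp (-(φw x - 2 * ψw x))
      ≤ exp (-ψw x) * exp (-ψw x) *
          (((Fintype.card (MIdx n (m + 1))) * n) *
            (exp (ψw x) * ∑ H : MIdx n (m + 1), (η x H) ^ 2)) *
          exp (-(φw x - 2 * ψw x)) := by
        apply mul_le_mul_of_nonneg_right _ (exp_pos _).le
        apply mul_le_mul_of_nonneg_left key (by positivity)
    _ = ((Fintype.card (MIdx n (m + 1))) * n) * (∑ H : MIdx n (m + 1), (η x H) ^ 2 *
          (exp (-ψw x) * exp (-ψw x) * exp (ψw x) * exp (-(φw x - 2 * ψw x)))) := by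
        simp only [Finset.mul_sum, Finset.sum_mul]
        exact Finset.sum_congr rfl fun H _ => by ring
    _ = ((Fintype.card (MIdx n (m + 1))) * n) *
          (∑ H : MIdx n (m + 1), (η x H) ^ 2 * exp (-(φw x - ψw x))) := by rw [e2]

end Helpers7
/-- (Truncation step in the density argument.) For
`η ∈ dom(d) ∩ dom(d*_{φ−ψ,φ−2ψ})` and cut-off functions `ρ_ν` with `|dρ_ν|² ≤ e^ψ`, each
`ρ_ν η` has compact support, lies in `dom(d) ∩ dom(d*_{φ−ψ,φ−2ψ})`, and `ρ_ν η → η` in the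
graph norm. (Here a `k`-form in the paper corresponds to degree `k + 1`.) -/
theorem cutoff_approximation_in_graph_norm
    (n k : ℕ) (X : Set (Euc n)) (hXo : IsOpen X) (hXc : IsConnected X)
    (φ ψ : Euc n → ℝ)
    (hφ : ContDiffOn ℝ (⊤ : ℕ∞) φ X) (hψ : ContDiffOn ℝ (⊤ : ℕ∞) ψ X)
    (ρ : ℕ → Euc n → ℝ)
    (hρsm : ∀ ν, ContDiff ℝ (⊤ : ℕ∞) (ρ ν))
    (hρc : ∀ ν, HasCompactSupport (ρ ν))
    (hρs : ∀ ν, tsupport (ρ ν) ⊆ X)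
    (hρ01 : ∀ ν x, 0 ≤ ρ ν x ∧ ρ ν x ≤ 1)
    (hρK : ∀ K : Set (Euc n), IsCompact K → K ⊆ X →
      ∃ ν₀, ∀ ν ≥ ν₀, ∀ x ∈ K, ρ ν x = 1)
    (hρgrad : ∀ ν, ∀ x ∈ X, (∑ ℓ : Fin n, (pder ℓ (ρ ν) x) ^ 2) ≤ exp (ψ x))
    (η : Form n (k + 1)) (du : Form n (k + 2)) (w : Form n (k + 1 - 1))
    (hη : MemL2Form X (fun x => φ x - ψ x) η)
    (hdu : HasDistD X η du) (hduL2 : MemL2Form X φ du)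
    (hw : IsAdjointVal X (fun x => φ x - 2 * ψ x) (fun x => φ x - ψ x) η w) :
    ∃ (D : ℕ → Form n (k + 2)) (W : ℕ → Form n (k + 1 - 1)),
      (∀ ν,
        (∀ I, HasCompactSupport fun x => ρ ν x * η x I) ∧
        MemL2Form X (fun x => φ x - ψ x) (fun x I => ρ ν x * η x I) ∧
        HasDistD X (fun x I => ρ ν x * η x I) (D ν) ∧
        MemL2Form X φ (D ν) ∧
        IsAdjointVal X (fun x => φ x - 2 * ψ x) (fun x => φ x - ψ x)
          (fun x I => ρ ν x * η x I) (W ν)) ∧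
      Tendsto (fun ν => wNorm X (fun x => φ x - ψ x)
          (fun x I => ρ ν x * η x I - η x I)) atTop (nhds 0) ∧
      Tendsto (fun ν => wNorm X φ (fun x H => D ν x H - du x H)) atTop (nhds 0) ∧
      Tendsto (fun ν => wNorm X (fun x => φ x - 2 * ψ x)
          (fun x J => W ν x J - w x J)) atTop (nhds 0) := by
  classical
  -- continuity of the weights
  have hφc : ContinuousOn φ X := hφ.continuousOn
  have hψc : ContinuousOn ψ X := hψ.continuousOn
  have hφψc : ContinuousOn (fun x => φ x - ψ x) X := hφc.sub hψc
  have hφ2ψc : ContinuousOn (fun x => φ x - 2 * ψ x) X :=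
    hφc.sub (continuousOn_const.mul hψc)
  have hρb : ∀ ν x, |ρ ν x| ≤ 1 := fun ν x =>
    abs_le.2 ⟨by linarith [(hρ01 ν x).1], (hρ01 ν x).2⟩
  -- the approximating derivative and adjoint values
  refine ⟨fun ν => fun x H => ρ ν x * du x H + wedgeF (ρ ν) η x H,
    fun ν => fun x J => ρ ν x * w x J - contrF ψ (ρ ν) η x J, ?_, ?_, ?_, ?_⟩
  · -- the per-ν properties
    intro ν
    have hwedgeL2 : MemL2Form X φ (wedgeF (ρ ν) η) :=
      memL2_wedge hXo hφc (hρsm ν) (hρgrad ν) hη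
    refine ⟨fun I => (hρc ν).mul_right, ?_, ?_, ?_, ?_⟩
    · exact MemL2Form.bdd_mul hXo hφψc hη (hρsm ν).continuous (hρb ν)
    · exact hasDistD_mul hXo hφψc hφc hφc hη hdu hduL2 (hρsm ν) (hρc ν) (hρs ν) hwedgeL2
    · exact MemL2Form.add' hXo hφc
        (MemL2Form.bdd_mul hXo hφc hduL2 (hρsm ν).continuous (hρb ν)) hwedgeL2
    · exact isAdjointVal_mul hXo hφψc hφ2ψc hψc (hρsm ν) (hρc ν) (hρs ν) (hρb ν)
        (hρgrad ν) hw
  · -- convergence of ρν η to η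
    apply tendsto_wNorm_zero hXo _ _ ?_
      (fun x => ∑ I : MIdx n (k + 1), 4 * ((η x I) ^ 2 * exp (-(φ x - ψ x)))) ?_ ?_ ?_
    · intro ν
      refine (Finset.aestronglyMeasurable_fun_sum _ fun I _ => ?_).mul (aesm_expw hXo hφψc)
      have h1 : AEStronglyMeasurable (fun x => ρ ν x * η x I - η x I) (volume.restrict X) :=
        ((hρsm ν).continuous.aestronglyMeasurable.mul (hη I).1).sub (hη I).1
      exact h1.mul h1
    · exact integrable_finset_sum _ fun I _ => ((hη I).2).const_mul 4
    · intro ν x hx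
      rw [Finset.sum_mul]
      refine Finset.sum_le_sum fun I _ => ?_
      have h01 := hρ01 ν x
      have h1 : (ρ ν x * η x I - η x I) * (ρ ν x * η x I - η x I) ≤ 4 * (η x I) ^ 2 := by
        have hr : (ρ ν x - 1) ^ 2 ≤ 1 := by nlinarith [h01.1, h01.2]
        have h3 := mul_le_mul_of_nonneg_right hr (sq_nonneg (η x I))
        calc (ρ ν x * η x I - η x I) * (ρ ν x * η x I - η x I)
            = (ρ ν x - 1) ^ 2 * (η x I) ^ 2 := by ring
          _ ≤ 1 * (η x I) ^ 2 := h3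
          _ ≤ 4 * (η x I) ^ 2 := by nlinarith [sq_nonneg (η x I)]
      calc (ρ ν x * η x I - η x I) * (ρ ν x * η x I - η x I) * exp (-(φ x - ψ x))
          ≤ 4 * (η x I) ^ 2 * exp (-(φ x - ψ x)) :=
            mul_le_mul_of_nonneg_right h1 (exp_pos _).le
        _ = 4 * ((η x I) ^ 2 * exp (-(φ x - ψ x))) := by ring
    · intro x hx
      filter_upwards [eventually_cutoff_one hXo ρ hρK hx] with ν hν I
      rw [hν.1]
      ring
  · -- convergence of D ν to du
    set C : ℝ := (Fintype.card (MIdx n (k + 1))) * n with hC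
    set NH : ℝ := (Fintype.card (MIdx n (k + 2)) : ℝ) with hNH
    apply tendsto_wNorm_zero hXo _ _ ?_
      (fun x => (∑ H : MIdx n (k + 2), 2 * ((du x H) ^ 2 * exp (-φ x)))
        + (2 * NH * C) * (∑ I : MIdx n (k + 1), (η x I) ^ 2 * exp (-(φ x - ψ x)))) ?_ ?_ ?_
    · intro ν
      refine (Finset.aestronglyMeasurable_fun_sum _ fun H _ => ?_).mul (aesm_expw hXo hφc)
      have h1 : AEStronglyMeasurable
          (fun x => ρ ν x * du x H + wedgeF (ρ ν) η x H - du x H) (volume.restrict X) :=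
        (((hρsm ν).continuous.aestronglyMeasurable.mul (hduL2 H).1).add
          (aesm_wedge_coef (hρsm ν) (fun I => (hη I).1) H)).sub (hduL2 H).1
      exact h1.mul h1
    · refine Integrable.add (integrable_finset_sum _ fun H _ => ((hduL2 H).2).const_mul 2) ?_
      exact (integrable_finset_sum _ fun I _ => (hη I).2).const_mul _
    · intro ν x hx
      rw [Finset.sum_mul]
      have hwb : ∀ H : MIdx n (k + 2), (wedgeF (ρ ν) η x H) ^ 2 * exp (-φ x) ≤
          C * (∑ I : MIdx n (k + 1), (η x I) ^ 2 * exp (-(φ x - ψ x))) := by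
        intro H
        rw [hC]
        exact wedge_sq_bound (hρgrad ν x hx) η H
      have hterm : ∀ H : MIdx n (k + 2),
          (ρ ν x * du x H + wedgeF (ρ ν) η x H - du x H) *
            (ρ ν x * du x H + wedgeF (ρ ν) η x H - du x H) * exp (-φ x)
          ≤ 2 * ((du x H) ^ 2 * exp (-φ x))
            + 2 * (C * (∑ I : MIdx n (k + 1), (η x I) ^ 2 * exp (-(φ x - ψ x)))) := by
        intro H
        have h01 := hρ01 ν x
        have h1 : (ρ ν x * du x H + wedgeF (ρ ν) η x H - du x H) *
            (ρ ν x * du x H + wedgeF (ρ ν) η x H - du x H)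
            ≤ 2 * (du x H) ^ 2 + 2 * (wedgeF (ρ ν) η x H) ^ 2 := by
          have hr : (ρ ν x - 1) ^ 2 ≤ 1 := by nlinarith [h01.1, h01.2]
          have h3 := mul_le_mul_of_nonneg_right hr (sq_nonneg (du x H))
          nlinarith [sq_nonneg ((ρ ν x - 1) * du x H - wedgeF (ρ ν) η x H), h3]
        calc (ρ ν x * du x H + wedgeF (ρ ν) η x H - du x H) *
              (ρ ν x * du x H + wedgeF (ρ ν) η x H - du x H) * exp (-φ x)
            ≤ (2 * (du x H) ^ 2 + 2 * (wedgeF (ρ ν) η x H) ^ 2) * exp (-φ x) :=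
              mul_le_mul_of_nonneg_right h1 (exp_pos _).le
          _ = 2 * ((du x H) ^ 2 * exp (-φ x))
              + 2 * ((wedgeF (ρ ν) η x H) ^ 2 * exp (-φ x)) := by ring
          _ ≤ 2 * ((du x H) ^ 2 * exp (-φ x))
              + 2 * (C * (∑ I : MIdx n (k + 1), (η x I) ^ 2 * exp (-(φ x - ψ x)))) := by
              have := hwb H
              linarith
      calc (∑ H : MIdx n (k + 2),
            (ρ ν x * du x H + wedgeF (ρ ν) η x H - du x H) *
              (ρ ν x * du x H + wedgeF (ρ ν) η x H - du x H) * exp (-φ x))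
          ≤ ∑ H : MIdx n (k + 2), (2 * ((du x H) ^ 2 * exp (-φ x))
              + 2 * (C * (∑ I : MIdx n (k + 1), (η x I) ^ 2 * exp (-(φ x - ψ x))))) :=
            Finset.sum_le_sum fun H _ => hterm H
        _ = (∑ H : MIdx n (k + 2), 2 * ((du x H) ^ 2 * exp (-φ x)))
            + (2 * NH * C) * (∑ I : MIdx n (k + 1), (η x I) ^ 2 * exp (-(φ x - ψ x))) := by
            rw [Finset.sum_add_distrib, Finset.sum_const, Finset.card_univ]
            rw [hNH]
            rw [nsmul_eq_mul]
            ring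
    · intro x hx
      filter_upwards [eventually_cutoff_one hXo ρ hρK hx] with ν hν H
      have hwz : wedgeF (ρ ν) η x H = 0 := by
        unfold wedgeF
        refine Finset.sum_eq_zero fun I _ => Finset.sum_eq_zero fun ℓ _ => ?_
        rw [hν.2 ℓ]
        ring
      rw [hν.1, hwz]
      ring
  · -- convergence of W ν to the adjoint value
    set C : ℝ := (Fintype.card (MIdx n (k + 1))) * n with hC
    apply tendsto_wNorm_zero hXo _ _ ?_
      (fun x => (∑ J : MIdx n (k + 1 - 1), 2 * ((w x J) ^ 2 * exp (-(φ x - 2 * ψ x))))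
        + (2 * (Fintype.card (MIdx n (k + 1 - 1)) : ℝ) * C) *
          (∑ H : MIdx n (k + 1), (η x H) ^ 2 * exp (-(φ x - ψ x)))) ?_ ?_ ?_
    · intro ν
      refine (Finset.aestronglyMeasurable_fun_sum _ fun J _ => ?_).mul (aesm_expw hXo hφ2ψc)
      have hcm : AEStronglyMeasurable (fun x => contrF ψ (ρ ν) η x J) (volume.restrict X) :=
        (memL2_contr hXo hφ2ψc hψc (hρsm ν) (hρgrad ν) hη J).1
      have h1 : AEStronglyMeasurable
          (fun x => ρ ν x * w x J - contrF ψ (ρ ν) η x J - w x J) (volume.restrict X) :=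
        (((hρsm ν).continuous.aestronglyMeasurable.mul (hw.2.1 J).1).sub hcm).sub (hw.2.1 J).1
      exact h1.mul h1
    · refine Integrable.add
        (integrable_finset_sum _ fun J _ => ((hw.2.1 J).2).const_mul 2) ?_
      exact (integrable_finset_sum _ fun H _ => (hη H).2).const_mul _
    · intro ν x hx
      rw [Finset.sum_mul]
      have hcb : ∀ J : MIdx n (k + 1 - 1), (contrF ψ (ρ ν) η x J) ^ 2 *
          exp (-(φ x - 2 * ψ x)) ≤
          C * (∑ H : MIdx n (k + 1), (η x H) ^ 2 * exp (-(φ x - ψ x))) := by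
        intro J
        rw [hC]
        exact contr_sq_bound (hρgrad ν x hx) η J
      have hterm : ∀ J : MIdx n (k + 1 - 1),
          (ρ ν x * w x J - contrF ψ (ρ ν) η x J - w x J) *
            (ρ ν x * w x J - contrF ψ (ρ ν) η x J - w x J) * exp (-(φ x - 2 * ψ x))
          ≤ 2 * ((w x J) ^ 2 * exp (-(φ x - 2 * ψ x)))
            + 2 * (C * (∑ H : MIdx n (k + 1), (η x H) ^ 2 * exp (-(φ x - ψ x)))) := by
        intro J
        have h01 := hρ01 ν x
        have h1 : (ρ ν x * w x J - contrF ψ (ρ ν) η x J - w x J) *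
            (ρ ν x * w x J - contrF ψ (ρ ν) η x J - w x J)
            ≤ 2 * (w x J) ^ 2 + 2 * (contrF ψ (ρ ν) η x J) ^ 2 := by
          have hr : (ρ ν x - 1) ^ 2 ≤ 1 := by nlinarith [h01.1, h01.2]
          have h3 := mul_le_mul_of_nonneg_right hr (sq_nonneg (w x J))
          nlinarith [sq_nonneg ((ρ ν x - 1) * w x J + contrF ψ (ρ ν) η x J), h3]
        calc (ρ ν x * w x J - contrF ψ (ρ ν) η x J - w x J) *
              (ρ ν x * w x J - contrF ψ (ρ ν) η x J - w x J) * exp (-(φ x - 2 * ψ x))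
            ≤ (2 * (w x J) ^ 2 + 2 * (contrF ψ (ρ ν) η x J) ^ 2) * exp (-(φ x - 2 * ψ x)) :=
              mul_le_mul_of_nonneg_right h1 (exp_pos _).le
          _ = 2 * ((w x J) ^ 2 * exp (-(φ x - 2 * ψ x)))
              + 2 * ((contrF ψ (ρ ν) η x J) ^ 2 * exp (-(φ x - 2 * ψ x))) := by ring
          _ ≤ 2 * ((w x J) ^ 2 * exp (-(φ x - 2 * ψ x)))
              + 2 * (C * (∑ H : MIdx n (k + 1), (η x H) ^ 2 * exp (-(φ x - ψ x)))) := by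
              have := hcb J
              linarith
      calc (∑ J : MIdx n (k + 1 - 1),
            (ρ ν x * w x J - contrF ψ (ρ ν) η x J - w x J) *
              (ρ ν x * w x J - contrF ψ (ρ ν) η x J - w x J) * exp (-(φ x - 2 * ψ x)))
          ≤ ∑ J : MIdx n (k + 1 - 1), (2 * ((w x J) ^ 2 * exp (-(φ x - 2 * ψ x)))
              + 2 * (C * (∑ H : MIdx n (k + 1), (η x H) ^ 2 * exp (-(φ x - ψ x))))) :=
            Finset.sum_le_sum fun J _ => hterm J
        _ = (∑ J : MIdx n (k + 1 - 1), 2 * ((w x J) ^ 2 * exp (-(φ x - 2 * ψ x))))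
            + (2 * (Fintype.card (MIdx n (k + 1 - 1)) : ℝ) * C) *
              (∑ H : MIdx n (k + 1), (η x H) ^ 2 * exp (-(φ x - ψ x))) := by
            rw [Finset.sum_add_distrib, Finset.sum_const, Finset.card_univ, nsmul_eq_mul]
            ring
    · intro x hx
      filter_upwards [eventually_cutoff_one hXo ρ hρK hx] with ν hν J
      have hcz : contrF ψ (ρ ν) η x J = 0 := by
        unfold contrF
        rw [Finset.sum_eq_zero fun H _ => Finset.sum_eq_zero fun ℓ _ => by
          rw [hν.2 ℓ]; ring]
        ring
      rw [hν.1, hcz]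
      ring
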